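/- arXiv:2411.16438 — 8 statements merged into one kernel-verified Lean document; each statement's English description precedes it below -/
import Mathlib

section
/- Let K ≥ 1 and let a weighted class hierarchy over the K classes be given by a finite index type J of nodes, a map v : J → Finset (Fin K) assigning to each node a set of classes, and weights w : J → ℝ with 0 ≤ w j for all j. Suppose the weighting is balanced with constant c > 0, i.e. for every class k, ∑_{j : k ∈ v j} w j = c. Then the hierarchical loss ℓ(f, y) = −∑_{j : y ∈ v j} w j · log(∑_{l ∈ v j} f l) is a proper scoring rule: for every probability vector π on Fin K (π k ≥ 0, ∑_k π k = 1) and every strictly positive probability vector f on Fin K (f k > 0, ∑_k f k = 1), the expected loss satisfies ∑_{k} π k · ℓ(f, k) ≥ ∑_{k} π k · ℓ(π, k). -/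
/-- The hierarchical loss with a balanced nonnegative weighting is a proper scoring rule:
its expectation under the true class probabilities `π` is minimized at `π`. -/
theorem hierarchical_loss_proper_scoring_rule
    {K : ℕ} (hK : 1 ≤ K) {J : Type*} [Fintype J]
    (v : J → Finset (Fin K)) (w : J → ℝ) (hw : ∀ j, 0 ≤ w j)
    (c : ℝ) (hc : 0 < c)
    (hbal : ∀ k : Fin K, ∑ j ∈ Finset.univ.filter (fun j => k ∈ v j), w j = c)
    (π f : Fin K → ℝ)
    (hπ0 : ∀ k, 0 ≤ π k) (hπ1 : ∑ k, π k = 1)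
    (hf0 : ∀ k, 0 < f k) (hf1 : ∑ k, f k = 1) :
    ∑ k, π k * (-(∑ j ∈ Finset.univ.filter (fun j => k ∈ v j),
        w j * Real.log (∑ l ∈ v j, π l)))
      ≤ ∑ k, π k * (-(∑ j ∈ Finset.univ.filter (fun j => k ∈ v j),
        w j * Real.log (∑ l ∈ v j, f l))) := by
  -- swap-of-summation identity
  have key : ∀ (a : Fin K → ℝ) (g : J → ℝ),
      ∑ k, a k * ∑ j ∈ Finset.univ.filter (fun j => k ∈ v j), g j
        = ∑ j, (∑ l ∈ v j, a l) * g j := by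
    intro a g
    simp_rw [Finset.mul_sum, Finset.sum_filter]
    rw [Finset.sum_comm]
    refine Finset.sum_congr rfl fun j _ => ?_
    rw [← Finset.sum_filter]
    simp [Finset.sum_mul]
  set P : J → ℝ := fun j => ∑ l ∈ v j, π l with hP
  set F : J → ℝ := fun j => ∑ l ∈ v j, f l with hF
  have hL : ∀ g : Fin K → ℝ,
      ∑ k, π k * (-(∑ j ∈ Finset.univ.filter (fun j => k ∈ v j),
          w j * Real.log (∑ l ∈ v j, g l)))
        = -∑ j, P j * (w j * Real.log (∑ l ∈ v j, g l)) := by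
    intro g
    have hk := key π (fun j => w j * Real.log (∑ l ∈ v j, g l))
    simp_rw [mul_neg, Finset.sum_neg_distrib]
    rw [hk]
  rw [hL, hL, neg_le_neg_iff]
  -- now: ∑ j, P j * (w j * log (F j)) ≤ ∑ j, P j * (w j * log (P j))
  have hP0 : ∀ j, 0 ≤ P j := fun j => Finset.sum_nonneg fun l _ => hπ0 l
  have hF0 : ∀ j, 0 ≤ F j := fun j => Finset.sum_nonneg fun l _ => (hf0 l).le
  have gibbs : ∀ j, P j * (w j * Real.log (F j)) - P j * (w j * Real.log (P j))
      ≤ w j * (F j - P j) := by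
    intro j
    rcases eq_or_lt_of_le (hP0 j) with h | h
    · rw [← h]
      simp only [zero_mul, sub_zero, mul_zero]
      exact mul_nonneg (hw j) (hF0 j)
    · have hvne : (v j).Nonempty := by
        by_contra hne
        rw [Finset.not_nonempty_iff_eq_empty] at hne
        simp [hP, hne] at h
      have hFpos : 0 < F j := Finset.sum_pos (fun l _ => hf0 l) hvne
      have hlog : Real.log (F j / P j) ≤ F j / P j - 1 :=
        Real.log_le_sub_one_of_pos (by positivity)
      rw [Real.log_div hFpos.ne' h.ne'] at hlog
      have h2 : P j * (Real.log (F j) - Real.log (P j)) ≤ F j - P j := by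
        calc P j * (Real.log (F j) - Real.log (P j)) ≤ P j * (F j / P j - 1) := by
              exact mul_le_mul_of_nonneg_left hlog h.le
          _ = F j - P j := by field_simp
      calc P j * (w j * Real.log (F j)) - P j * (w j * Real.log (P j))
          = w j * (P j * (Real.log (F j) - Real.log (P j))) := by ring
        _ ≤ w j * (F j - P j) := mul_le_mul_of_nonneg_left h2 (hw j)
  have hsum : ∑ j, (P j * (w j * Real.log (F j)) - P j * (w j * Real.log (P j)))
      ≤ ∑ j, w j * (F j - P j) := Finset.sum_le_sum fun j _ => gibbs j
  have hWF : ∑ j, F j * w j = c := by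
    rw [← key f w]
    simp_rw [hbal, ← Finset.sum_mul, hf1, one_mul]
  have hWP : ∑ j, P j * w j = c := by
    rw [← key π w]
    simp_rw [hbal, ← Finset.sum_mul, hπ1, one_mul]
  have hzero : ∑ j, w j * (F j - P j) = 0 := by
    simp_rw [mul_sub, Finset.sum_sub_distrib]
    simp_rw [mul_comm (w _)] at *
    rw [hWF, hWP, sub_self]
  rw [hzero] at hsum
  rw [Finset.sum_sub_distrib] at hsum
  linarith
end

section
/- Let K ≥ 1 and let a class hierarchy over the K classes be given by a finite index type J, a map v : J → Finset (Fin K) with v j nonempty for every j, and weights w : J → ℝ with 0 ≤ w j. If the weighting is not balanced, i.e. there exist classes k₁, k₂ with ∑_{j : k₁ ∈ v j} w j ≠ ∑_{j : k₂ ∈ v j} w j, then the hierarchical loss ℓ(f, y) = −∑_{j : y ∈ v j} w j · log(∑_{l ∈ v j} f l) is not a proper scoring rule: for every strictly positive probability vector π on Fin K there exists a strictly positive probability vector f on Fin K with ∑_{k} π k · ℓ(f, k) < ∑_{k} π k · ℓ(π, k). -/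
/-!
The expected loss `L(f) = ∑ₖ π k · ℓ(f, k)` equals `-∑ⱼ w j · π(v j) · log f(v j)`. Moving mass
`t` from class `k₂` to class `k₁` gives `d/dt L(π + t(e_{k₁} - e_{k₂})) = -(c_{k₁} - c_{k₂})` at
`t = 0`, where `c_k` is the total weight of the nodes containing `k`: the factor `π(v j)` cancels
against the derivative of the logarithm. When the weighting is not balanced this derivative is
nonzero, so `π` is not a local minimum of `L` along this line, while all small perturbations are
still strictly positive probability vectors.
-/

open Finset Filter Topology

section HierarchicalLoss

variable {α J : Type*} [Fintype J] [DecidableEq α] (v : J → Finset α) (w : J → ℝ)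

noncomputable def hierarchicalLoss (f : α → ℝ) (y : α) : ℝ :=
  -∑ j ∈ univ.filter (fun j => y ∈ v j), w j * Real.log (∑ l ∈ v j, f l)

theorem sum_mul_sum_filter_mem [Fintype α] {M : Type*} [CommSemiring M] (π : α → M) (g : J → M) :
    ∑ y, π y * ∑ j ∈ univ.filter (fun j => y ∈ v j), g j = ∑ j, (∑ l ∈ v j, π l) * g j := by
  simp only [sum_filter, mul_sum, mul_ite, mul_zero]
  rw [sum_comm]
  refine sum_congr rfl fun j _ => ?_
  rw [← sum_filter, filter_univ_mem, sum_mul]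

theorem sum_mul_hierarchicalLoss [Fintype α] (π f : α → ℝ) :
    ∑ y, π y * hierarchicalLoss v w f y
      = -∑ j, (∑ l ∈ v j, π l) * (w j * Real.log (∑ l ∈ v j, f l)) := by
  simp only [hierarchicalLoss, mul_neg, sum_neg_distrib, sum_mul_sum_filter_mem]

theorem hasDerivAt_sum_mul_hierarchicalLoss_add_smul [Fintype α] (π f d : α → ℝ)
    (hf : ∀ j, ∑ l ∈ v j, f l ≠ 0) :
    HasDerivAt (fun t : ℝ => ∑ y, π y * hierarchicalLoss v w (f + t • d) y)
      (-∑ j, (∑ l ∈ v j, π l) * (w j * ((∑ l ∈ v j, d l) / ∑ l ∈ v j, f l))) 0 := by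
  have hmass (j : J) : HasDerivAt (fun t : ℝ => ∑ l ∈ v j, (f + t • d) l) (∑ l ∈ v j, d l) 0 := by
    simpa [sum_add_distrib, ← mul_sum] using
      ((hasDerivAt_id (0 : ℝ)).mul_const (∑ l ∈ v j, d l)).const_add (∑ l ∈ v j, f l)
  have hlog (j : J) : HasDerivAt (fun t : ℝ => Real.log (∑ l ∈ v j, (f + t • d) l))
      ((∑ l ∈ v j, d l) / ∑ l ∈ v j, f l) 0 := by
    simpa using (hmass j).log (by simpa using hf j)
  simp only [sum_mul_hierarchicalLoss]
  exact (HasDerivAt.fun_sum fun j _ => ((hlog j).const_mul _).const_mul _).neg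

theorem hasDerivAt_sum_mul_hierarchicalLoss_add_smul_self [Fintype α] (π d : α → ℝ)
    (hπ : ∀ j, ∑ l ∈ v j, π l ≠ 0) :
    HasDerivAt (fun t : ℝ => ∑ y, π y * hierarchicalLoss v w (π + t • d) y)
      (-∑ j, w j * ∑ l ∈ v j, d l) 0 := by
  convert hasDerivAt_sum_mul_hierarchicalLoss_add_smul v w π π d hπ using 3 with j
  field_simp [hπ j]

theorem sum_mul_sum_single_sub_single (a b : α) :
    ∑ j, w j * ∑ l ∈ v j, (Pi.single a 1 - Pi.single b 1 : α → ℝ) l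
      = ∑ j ∈ univ.filter (fun j => a ∈ v j), w j
        - ∑ j ∈ univ.filter (fun j => b ∈ v j), w j := by
  simp [sum_sub_distrib, sum_pi_single', mul_sub, sum_filter]

end HierarchicalLoss

theorem eventually_forall_pos_add_smul {α : Type*} [Finite α] {f : α → ℝ} (hf : ∀ k, 0 < f k)
    (d : α → ℝ) : ∀ᶠ t in 𝓝 (0 : ℝ), ∀ k, 0 < (f + t • d) k := by
  refine eventually_all.2 fun k => ?_
  refine ContinuousAt.eventually_lt continuousAt_const (by fun_prop) ?_
  simpa using hf k

theorem hierarchical_loss_not_proper_of_not_balanced_general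
    {K : ℕ} {J : Type*} [Fintype J]
    (v : J → Finset (Fin K)) (hne : ∀ j, (v j).Nonempty)
    (w : J → ℝ)
    (k₁ k₂ : Fin K)
    (hunbal : ∑ j ∈ Finset.univ.filter (fun j => k₁ ∈ v j), w j
      ≠ ∑ j ∈ Finset.univ.filter (fun j => k₂ ∈ v j), w j) :
    ∀ π : Fin K → ℝ, (∀ k, 0 < π k) → ∑ k, π k = 1 →
      ∃ f : Fin K → ℝ, (∀ k, 0 < f k) ∧ ∑ k, f k = 1 ∧
        ∑ k, π k * (-(∑ j ∈ Finset.univ.filter (fun j => k ∈ v j),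
            w j * Real.log (∑ l ∈ v j, f l)))
          < ∑ k, π k * (-(∑ j ∈ Finset.univ.filter (fun j => k ∈ v j),
            w j * Real.log (∑ l ∈ v j, π l))) := by
  intro π hπ hπ1
  by_contra! hmin
  set d : Fin K → ℝ := Pi.single k₁ 1 - Pi.single k₂ 1
  have hlocal : IsLocalMin (fun t : ℝ => ∑ k, π k * hierarchicalLoss v w (π + t • d) k) 0 := by
    filter_upwards [eventually_forall_pos_add_smul hπ d] with t ht
    simpa [hierarchicalLoss] using
      hmin _ ht (by simp [d, sum_add_distrib, ← mul_sum, sum_sub_distrib, hπ1])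
  have hnode (j : J) : ∑ l ∈ v j, π l ≠ 0 := (sum_pos (fun l _ => hπ l) (hne j)).ne'
  have hderiv := hlocal.hasDerivAt_eq_zero
    (hasDerivAt_sum_mul_hierarchicalLoss_add_smul_self v w π d hnode)
  rw [neg_eq_zero, sum_mul_sum_single_sub_single] at hderiv
  exact hunbal (sub_eq_zero.1 hderiv)

/-- If the nonnegative weighting of a class hierarchy (with nonempty nodes) is not balanced,
then the hierarchical loss is not a proper scoring rule: for every strictly positive
probability vector `π` there is a strictly positive probability vector `f` whose expected
loss under `π` is strictly smaller than that of `π` itself. -/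
theorem hierarchical_loss_not_proper_of_not_balanced
    {K : ℕ} (hK : 1 ≤ K) {J : Type*} [Fintype J]
    (v : J → Finset (Fin K)) (hne : ∀ j, (v j).Nonempty)
    (w : J → ℝ) (hw : ∀ j, 0 ≤ w j)
    (k₁ k₂ : Fin K)
    (hunbal : ∑ j ∈ Finset.univ.filter (fun j => k₁ ∈ v j), w j
      ≠ ∑ j ∈ Finset.univ.filter (fun j => k₂ ∈ v j), w j) :
    ∀ π : Fin K → ℝ, (∀ k, 0 < π k) → ∑ k, π k = 1 →
      ∃ f : Fin K → ℝ, (∀ k, 0 < f k) ∧ ∑ k, f k = 1 ∧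
        ∑ k, π k * (-(∑ j ∈ Finset.univ.filter (fun j => k ∈ v j),
            w j * Real.log (∑ l ∈ v j, f l)))
          < ∑ k, π k * (-(∑ j ∈ Finset.univ.filter (fun j => k ∈ v j),
            w j * Real.log (∑ l ∈ v j, π l))) :=
  hierarchical_loss_not_proper_of_not_balanced_general v hne w k₁ k₂ hunbal
end

section
/- Let (V, root, parent, d, h) be a finite rooted tree with depth function d and height function h, let q ≥ 0 with q ≠ 1, and let w : V → ℝ be an exponential weighting for q. Then for every node v with v ≠ root and parent v ≠ root, the weight of v is determined from that of its parent by w v = q · (1 − q^{h (parent v)})/(1 − q^{h v + 1}) · w (parent v). -/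
/-- For the exponential weighting of a finite rooted tree, the weight of a non-root node
whose parent is also not the root is determined from the parent's weight by
`w v = q * (1 - q ^ h (parent v)) / (1 - q ^ (h v + 1)) * w (parent v)`. -/
theorem exponential_weighting_recursion
    {V : Type*} [Fintype V] [DecidableEq V]
    (root : V) (parent : V → V) (hparent : parent root = root)
    (d : V → ℕ) (hd0 : d root = 0)
    (hd : ∀ v, v ≠ root → d v = d (parent v) + 1)
    (h : V → ℕ)
    (hhleaf : ∀ v, (∀ u, u ≠ v → parent u ≠ v) → h v = 0)
    (hhnode : ∀ v, ¬ (∀ u, u ≠ v → parent u ≠ v) →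
      h v = 1 + (Finset.univ.filter (fun u => u ≠ v ∧ parent u = v)).sup h)
    (q : ℝ) (hq0 : 0 ≤ q) (hq1 : q ≠ 1)
    (w : V → ℝ) (S : V → ℝ)
    (hS0 : S root = w root)
    (hSrec : ∀ v, v ≠ root → S v = S (parent v) + w v)
    (hw0 : w root = 0)
    (hwrec : ∀ v, v ≠ root →
      w v = (1 / 2 - S (parent v)) * (1 - q) / (1 - q ^ (h v + 1))) :
    ∀ v, v ≠ root → parent v ≠ root →
      w v = q * (1 - q ^ h (parent v)) / (1 - q ^ (h v + 1)) * w (parent v) := by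
  have key : ∀ n : ℕ, (1 : ℝ) - q ^ (n + 1) ≠ 0 := by
    intro n
    rcases lt_or_gt_of_ne hq1 with hlt | hgt
    · have : q ^ (n + 1) < 1 := pow_lt_one₀ hq0 hlt (Nat.succ_ne_zero n)
      linarith
    · have : 1 < q ^ (n + 1) := one_lt_pow₀ hgt (Nat.succ_ne_zero n)
      linarith
  intro v hv hp
  rw [hwrec v hv, hwrec (parent v) hp, hSrec (parent v) hp, hwrec (parent v) hp]
  have h1 := key (h v)
  have h2 := key (h (parent v))
  field_simp
  ring
end

section
/- Let (V, root, parent, d, h) be a finite rooted tree with depth function d and height function h, let q ≥ 0 with q ≠ 1, and let w : V → ℝ be an exponential weighting for q. Then for every node v with v ≠ root and parent v ≠ root such that h (parent v) = h v + 1, one has w v = q · w (parent v). In particular this holds for every non-root node whose parent's height exceeds its own by exactly one, as in perfect trees. -/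
/-- For the exponential weighting of a finite rooted tree, if the height of a node's
parent exceeds its own height by exactly one (as in perfect trees), then
`w v = q * w (parent v)`. -/
theorem exponential_weighting_geometric
    {V : Type*} [Fintype V] [DecidableEq V]
    (root : V) (parent : V → V) (hparent : parent root = root)
    (d : V → ℕ) (hd0 : d root = 0)
    (hd : ∀ v, v ≠ root → d v = d (parent v) + 1)
    (h : V → ℕ)
    (hhleaf : ∀ v, (∀ u, u ≠ v → parent u ≠ v) → h v = 0)
    (hhnode : ∀ v, ¬ (∀ u, u ≠ v → parent u ≠ v) →
      h v = 1 + (Finset.univ.filter (fun u => u ≠ v ∧ parent u = v)).sup h)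
    (q : ℝ) (hq0 : 0 ≤ q) (hq1 : q ≠ 1)
    (w : V → ℝ) (S : V → ℝ)
    (hS0 : S root = w root)
    (hSrec : ∀ v, v ≠ root → S v = S (parent v) + w v)
    (hw0 : w root = 0)
    (hwrec : ∀ v, v ≠ root →
      w v = (1 / 2 - S (parent v)) * (1 - q) / (1 - q ^ (h v + 1))) :
    ∀ v, v ≠ root → parent v ≠ root → h (parent v) = h v + 1 →
      w v = q * w (parent v) := by
  have hpow : ∀ k : ℕ, 1 ≤ k → (1 : ℝ) - q ^ k ≠ 0 := by
    intro k hk hqk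
    have hqk' : q ^ k = 1 := by linarith
    rcases lt_trichotomy q 1 with hlt | heq | hgt
    · have : q ^ k < 1 := pow_lt_one₀ hq0 hlt (by omega)
      linarith
    · exact hq1 heq
    · have : 1 < q ^ k := one_lt_pow₀ hgt (by omega)
      linarith
  intro v hv hp hh
  have h1 := hwrec v hv
  have h2 := hwrec (parent v) hp
  have h3 := hSrec (parent v) hp
  rw [hh] at h2
  set n := h v with hn
  set A := 1 / 2 - S (parent (parent v)) with hA
  have hS' : S (parent v) = S (parent (parent v)) + A * (1 - q) / (1 - q ^ (n + 1 + 1)) := by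
    rw [h3, h2]
  rw [h1, hS', h2]
  have d1 : (1 : ℝ) - q ^ (n + 1) ≠ 0 := hpow (n + 1) (by omega)
  have d2 : (1 : ℝ) - q ^ (n + 1 + 1) ≠ 0 := hpow (n + 1 + 1) (by omega)
  field_simp
  ring
end

section
/- Let (V, root, parent, d, h) be a finite rooted tree with depth function d and height function h, let q > 0 with q ≠ 1, and let w : V → ℝ be an exponential weighting for q. Then the weighting is zero at the root and strictly positive elsewhere: w v > 0 for every v ≠ root; moreover the cumulative weight satisfies S v ≤ 1/2 for every node v. -/
/-- For the exponential weighting (with `q > 0`, `q ≠ 1`) of a finite rooted tree, the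
weight is zero at the root and strictly positive elsewhere, and the cumulative weight
is at most `1/2` at every node. -/
theorem exponential_weighting_positive
    {V : Type*} [Fintype V] [DecidableEq V]
    (root : V) (parent : V → V) (hparent : parent root = root)
    (d : V → ℕ) (hd0 : d root = 0)
    (hd : ∀ v, v ≠ root → d v = d (parent v) + 1)
    (h : V → ℕ)
    (hhleaf : ∀ v, (∀ u, u ≠ v → parent u ≠ v) → h v = 0)
    (hhnode : ∀ v, ¬ (∀ u, u ≠ v → parent u ≠ v) →
      h v = 1 + (Finset.univ.filter (fun u => u ≠ v ∧ parent u = v)).sup h)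
    (q : ℝ) (hq0 : 0 < q) (hq1 : q ≠ 1)
    (w : V → ℝ) (S : V → ℝ)
    (hS0 : S root = w root)
    (hSrec : ∀ v, v ≠ root → S v = S (parent v) + w v)
    (hw0 : w root = 0)
    (hwrec : ∀ v, v ≠ root →
      w v = (1 / 2 - S (parent v)) * (1 - q) / (1 - q ^ (h v + 1))) :
    (∀ v, v ≠ root → 0 < w v) ∧ (∀ v, S v ≤ 1 / 2) := by
  have hq1' : (1 : ℝ) - q ≠ 0 := by
    intro hc
    exact hq1 (by linarith)
  have key : ∀ n : ℕ, ∀ v, d v ≤ n →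
      (v ≠ root → 0 < w v) ∧ S v ≤ 1/2 ∧
        (¬ (∀ u, u ≠ v → parent u ≠ v) → S v < 1/2) := by
    intro n
    induction n with
    | zero =>
      intro v hv
      have hvr : v = root := by
        by_contra hne
        have := hd v hne
        omega
      subst hvr
      refine ⟨fun hc => absurd rfl hc, ?_, ?_⟩ <;> rw [hS0, hw0] <;> norm_num
    | succ n ih =>
      intro v hv
      by_cases hvr : v = root
      · subst hvr
        refine ⟨fun hc => absurd rfl hc, ?_, ?_⟩ <;> rw [hS0, hw0] <;> norm_num
      · have hdp : d (parent v) ≤ n := by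
          have := hd v hvr
          omega
        have hvp : v ≠ parent v := by
          intro hc
          have := hd v hvr
          rw [← hc] at this
          omega
        have hpnl : ¬ (∀ u, u ≠ parent v → parent u ≠ parent v) := by
          intro hc
          exact hc v hvp rfl
        obtain ⟨-, -, hSp⟩ := ih (parent v) hdp
        have hSp' : S (parent v) < 1/2 := hSp hpnl
        set m := h v with hm
        set G : ℝ := ∑ i ∈ Finset.range (m + 1), q ^ i with hG
        have hGpos : 0 < G := by
          apply Finset.sum_pos
          · intro i _
            exact pow_pos hq0 i
          · exact Finset.nonempty_range_add_one
        have hG1 : 1 ≤ G := by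
          have : (1 : ℝ) = q ^ 0 := by norm_num
          rw [this, hG]
          exact Finset.single_le_sum (f := fun i => q ^ i)
            (fun i _ => le_of_lt (pow_pos hq0 i)) (Finset.mem_range.mpr (by omega))
        have hfac : 1 - q ^ (m + 1) = (1 - q) * G := by
          have := geom_sum_mul q (m + 1)
          rw [hG]
          nlinarith [this]
        have hwv : w v = (1/2 - S (parent v)) / G := by
          rw [hwrec v hvr, hfac]
          rw [mul_div_assoc]
          have hGne : G ≠ 0 := ne_of_gt hGpos
          field_simp
        have hwpos : 0 < w v := by
          rw [hwv]
          exact div_pos (by linarith) hGpos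
        have hwle : w v ≤ 1/2 - S (parent v) := by
          rw [hwv]
          exact div_le_self (by linarith) hG1
        have hSv : S v = S (parent v) + w v := hSrec v hvr
        refine ⟨fun _ => hwpos, by linarith, ?_⟩
        intro hnl
        have hm1 : 1 ≤ m := by
          rw [hm, hhnode v hnl]
          omega
        have hG2 : 1 < G := by
          rw [hG]
          have h2 : (2 : ℕ) ≤ m + 1 := by omega
          calc (1 : ℝ) < 1 + q := by linarith
            _ = ∑ i ∈ Finset.range 2, q ^ i := by simp [Finset.sum_range_succ]
            _ ≤ ∑ i ∈ Finset.range (m + 1), q ^ i := by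
                apply Finset.sum_le_sum_of_subset_of_nonneg
                · exact Finset.range_subset_range.mpr h2
                · intro i _ _
                  exact le_of_lt (pow_pos hq0 i)
        have hwlt : w v < 1/2 - S (parent v) := by
          rw [hwv]
          exact div_lt_self (by linarith) hG2
        linarith
  constructor
  · intro v hv
    exact (key (d v) v le_rfl).1 hv
  · intro v
    exact (key (d v) v le_rfl).2.1
end

section
/- Let (V, root, parent, d, h) be a finite rooted tree with depth function d and height function h, let q ≥ 0 with q ≠ 1, and let w : V → ℝ be an exponential weighting for q. Suppose additionally that h (parent v) = h v + 1 for every node v ≠ root (all leaves are at the same depth h root). Then the weights are determined explicitly by depth: for every v ≠ root, w v = q^{d v − 1} · (1 − q) / (2 · (1 − q^{h root})). -/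
/-!
In a tree all of whose leaves lie at depth `H = h root`, the quantity `h v + d v` is constant
along parent links, so `h v = H - d v`. Feeding this into the recursion for `w`, induction from
the root shows that the cumulative weights are `S v = (1 - q ^ d v) / (2 * (1 - q ^ H))`;
the weight `w v = S v - S (parent v)` is then a difference of two consecutive terms.
-/

theorem induction_from_root {V : Type*} {root : V} {parent : V → V} (d : V → ℕ)
    (hd : ∀ v, v ≠ root → d (parent v) < d v) {P : V → Prop} (root_mem : P root)
    (step : ∀ v, v ≠ root → P (parent v) → P v) (v : V) : P v := by
  by_cases hv : v = root
  · exact hv ▸ root_mem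
  · exact step v hv (induction_from_root d hd root_mem step (parent v))
termination_by d v
decreasing_by exact hd v hv

lemma one_sub_pow_ne_zero {q : ℝ} (hq0 : 0 ≤ q) (hq1 : q ≠ 1) {n : ℕ} (hn : n ≠ 0) :
    1 - q ^ n ≠ 0 :=
  sub_ne_zero.mpr fun h => hq1 ((pow_eq_one_iff_of_nonneg hq0 hn).mp h.symm)

section RootedTree

variable {V : Type*} {root : V} {parent : V → V} {d : V → ℕ}
  (hd0 : d root = 0) (hd : ∀ v, v ≠ root → d v = d (parent v) + 1)

include hd0 hd in
theorem height_add_depth_eq_height_root {h : V → ℕ}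
    (hperfect : ∀ v, v ≠ root → h (parent v) = h v + 1) (v : V) :
    h v + d v = h root :=
  induction_from_root (parent := parent) (P := fun v => h v + d v = h root) d
    (fun v hv => by rw [hd v hv]; omega) (by rw [hd0, add_zero])
    (fun v hv ih => by rw [← ih, hperfect v hv, hd v hv]; ring) v

include hd0 hd in
theorem cumulative_weight_mul_eq {h : V → ℕ} {q : ℝ} (hq0 : 0 ≤ q) (hq1 : q ≠ 1)
    {w S : V → ℝ} (hS0 : S root = 0) (hSrec : ∀ v, v ≠ root → S v = S (parent v) + w v)
    (hwrec : ∀ v, v ≠ root → w v = (1 / 2 - S (parent v)) * (1 - q) / (1 - q ^ (h v + 1)))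
    (hperfect : ∀ v, v ≠ root → h (parent v) = h v + 1) (v : V) :
    2 * (1 - q ^ h root) * S v = 1 - q ^ d v := by
  refine induction_from_root (parent := parent)
    (P := fun v => 2 * (1 - q ^ h root) * S v = 1 - q ^ d v) d
    (fun v hv => by rw [hd v hv]; omega) (by rw [hS0, hd0]; ring) (fun v hv ih => ?_) v
  have hH : q ^ h root = q ^ d (parent v) * q ^ (h v + 1) := by
    rw [← pow_add, ← height_add_depth_eq_height_root hd0 hd hperfect v, hd v hv]; ring_nf
  have hne : 1 - q ^ (h v + 1) ≠ 0 := one_sub_pow_ne_zero hq0 hq1 (Nat.succ_ne_zero _)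
  rw [hSrec v hv, hwrec v hv, hd v hv, hH]
  rw [hH] at ih
  field_simp
  linear_combination (q - q ^ (h v + 1)) * ih

end RootedTree

theorem exponential_weighting_explicit_general
    {V : Type*}
    (root : V) (parent : V → V)
    (d : V → ℕ) (hd0 : d root = 0)
    (hd : ∀ v, v ≠ root → d v = d (parent v) + 1)
    (h : V → ℕ)
    (q : ℝ) (hq0 : 0 ≤ q) (hq1 : q ≠ 1)
    (w : V → ℝ) (S : V → ℝ)
    (hS0 : S root = w root)
    (hSrec : ∀ v, v ≠ root → S v = S (parent v) + w v)
    (hw0 : w root = 0)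
    (hwrec : ∀ v, v ≠ root →
      w v = (1 / 2 - S (parent v)) * (1 - q) / (1 - q ^ (h v + 1)))
    (hperfect : ∀ v, v ≠ root → h (parent v) = h v + 1) :
    ∀ v, v ≠ root →
      w v = q ^ (d v - 1) * (1 - q) / (2 * (1 - q ^ h root)) := by
  intro v hv
  have hH : h root ≠ 0 := by
    have := height_add_depth_eq_height_root hd0 hd hperfect v
    have := hd v hv
    omega
  have hne := one_sub_pow_ne_zero hq0 hq1 hH
  have hS := cumulative_weight_mul_eq hd0 hd hq0 hq1 (hS0.trans hw0) hSrec hwrec hperfect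
  have hw : w v = S v - S (parent v) := by rw [hSrec v hv]; ring
  rw [hw, hd v hv, Nat.add_sub_cancel, eq_div_iff (mul_ne_zero two_ne_zero hne)]
  have hSv := hS v
  rw [hd v hv, pow_succ] at hSv
  linear_combination hSv - hS (parent v)

/-- For the exponential weighting of a finite rooted tree in which every non-root node's
parent has height exactly one more than the node (all leaves at the same depth `h root`),
the weights are given explicitly by depth:
`w v = q ^ (d v - 1) * (1 - q) / (2 * (1 - q ^ h root))` for every `v ≠ root`. -/
theorem exponential_weighting_explicit
    {V : Type*} [Fintype V] [DecidableEq V]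
    (root : V) (parent : V → V) (hparent : parent root = root)
    (d : V → ℕ) (hd0 : d root = 0)
    (hd : ∀ v, v ≠ root → d v = d (parent v) + 1)
    (h : V → ℕ)
    (hhleaf : ∀ v, (∀ u, u ≠ v → parent u ≠ v) → h v = 0)
    (hhnode : ∀ v, ¬ (∀ u, u ≠ v → parent u ≠ v) →
      h v = 1 + (Finset.univ.filter (fun u => u ≠ v ∧ parent u = v)).sup h)
    (q : ℝ) (hq0 : 0 ≤ q) (hq1 : q ≠ 1)
    (w : V → ℝ) (S : V → ℝ)
    (hS0 : S root = w root)
    (hSrec : ∀ v, v ≠ root → S v = S (parent v) + w v)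
    (hw0 : w root = 0)
    (hwrec : ∀ v, v ≠ root →
      w v = (1 / 2 - S (parent v)) * (1 - q) / (1 - q ^ (h v + 1)))
    (hperfect : ∀ v, v ≠ root → h (parent v) = h v + 1) :
    ∀ v, v ≠ root →
      w v = q ^ (d v - 1) * (1 - q) / (2 * (1 - q ^ h root)) :=
  exponential_weighting_explicit_general root parent d hd0 hd h q hq0 hq1 w S hS0 hSrec hw0 hwrec
    hperfect
end

section
/- Let (V, root, parent, d) be a finite rooted tree with depth function d, let α be a real number, let w : V → ℝ be the HXE weighting for α, and let F : V → ℝ satisfy F v > 0 for all v and F root = 1. Define A, B : V → ℝ recursively by A root = 0, A v = A (parent v) + exp(−α · d v) · log(F v / F (parent v)) for v ≠ root, and B root = 0, B v = B (parent v) + w v · log (F v) for v ≠ root. Then the hierarchical cross-entropy telescopes into the weighted hierarchical form: for every leaf y, A y = B y. (Here A y is the HXE sum −ℓ_HXE along the path from the root to y with conditional ratios F v / F (parent v), and B y is the corresponding sum of w v · log F v.) -/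
/-- The hierarchical cross-entropy telescopes into the weighted hierarchical form: along
the path from the root to any leaf `y`, the HXE sum `A` of depth-discounted logs of
conditional ratios `F v / F (parent v)` equals the weighted sum `B` of `w v * log (F v)`
for the HXE weighting `w`. -/
theorem hxe_telescopes_to_weighted_form
    {V : Type*} [Fintype V]
    (root : V) (parent : V → V) (hparent : parent root = root)
    (d : V → ℕ) (hd0 : d root = 0)
    (hd : ∀ v, v ≠ root → d v = d (parent v) + 1)
    (α : ℝ) (w : V → ℝ)
    (hw0 : w root = 0)
    (hwleaf : ∀ v, v ≠ root → (∀ u, u ≠ v → parent u ≠ v) →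
      w v = Real.exp (-α * (d v : ℝ)))
    (hwnode : ∀ v, v ≠ root → ¬ (∀ u, u ≠ v → parent u ≠ v) →
      w v = Real.exp (-α * (d v : ℝ)) - Real.exp (-α * ((d v : ℝ) + 1)))
    (F : V → ℝ) (hF : ∀ v, 0 < F v) (hFroot : F root = 1)
    (A B : V → ℝ)
    (hA0 : A root = 0)
    (hArec : ∀ v, v ≠ root →
      A v = A (parent v) + Real.exp (-α * (d v : ℝ)) * Real.log (F v / F (parent v)))
    (hB0 : B root = 0)
    (hBrec : ∀ v, v ≠ root → B v = B (parent v) + w v * Real.log (F v)) :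
    ∀ y, (∀ u, u ≠ y → parent u ≠ y) → A y = B y := by
  -- Key invariant: A v = B v + (exp(-α d v) - w v) * log (F v)
  have key : ∀ n : ℕ, ∀ v, d v = n →
      A v = B v + (Real.exp (-α * (d v : ℝ)) - w v) * Real.log (F v) := by
    intro n
    induction n using Nat.strong_induction_on with
    | _ n ih =>
      intro v hv
      by_cases hvr : v = root
      · subst hvr
        simp [hA0, hB0, hw0, hFroot]
      · have hdv := hd v hvr
        set p := parent v with hp
        have hdp : d p < n := by omega
        have hIH := ih (d p) hdp p rfl
        have hvp : v ≠ p := by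
          intro h; rw [← h] at hdv; omega
        have hplog : (Real.exp (-α * (d p : ℝ)) - w p) * Real.log (F p)
            = Real.exp (-α * (d v : ℝ)) * Real.log (F p) := by
          by_cases hpr : p = root
          · rw [hpr, hFroot]; simp
          · have hnotleaf : ¬ (∀ u, u ≠ p → parent u ≠ p) := by
              push_neg
              exact ⟨v, hvp, hp.symm⟩
            rw [hwnode p hpr hnotleaf]
            have : ((d p : ℝ) + 1) = (d v : ℝ) := by
              rw [hdv]; push_cast; ring
            rw [this]; ring
        rw [hArec v hvr, hBrec v hvr, hIH,
          Real.log_div (ne_of_gt (hF v)) (ne_of_gt (hF p))]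
        have := hplog
        ring_nf
        ring_nf at this
        linarith
  intro y hy
  have := key (d y) y rfl
  by_cases hyr : y = root
  · subst hyr; rw [hA0, hB0]
  · rw [hwleaf y hyr hy] at this
    simpa using this
end

section
/- Let K ≥ 1 and let a class hierarchy over the K classes be given by a finite index type J, a map v : J → Finset (Fin K), and weights w : J → ℝ with 0 ≤ w j, balanced with constant 1/2 (for every class k, ∑_{j : k ∈ v j} w j = 1/2). Let f be a probability vector on Fin K (f k ≥ 0, ∑_k f k = 1) and y : Fin K a class. Then the tree Wasserstein distance between f and the Dirac mass at y reduces to an expectation of class distances: ∑_{j ∈ J} w j · |∑_{k ∈ v j} f k − (if y ∈ v j then 1 else 0)| = ∑_{k} f k · d(y, k), where d(y, k) = 1 − 2 · ∑_{j : y ∈ v j ∧ k ∈ v j} w j. -/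
/-- For a class hierarchy with nonnegative weights balanced with constant `1/2`, the tree
Wasserstein distance between a probability vector `f` on the classes and the Dirac mass
at a class `y` equals the expectation under `f` of the hierarchical distance to `y`. -/
theorem tree_wasserstein_eq_expected_distance
    {K : ℕ} (hK : 1 ≤ K) {J : Type*} [Fintype J]
    (v : J → Finset (Fin K)) (w : J → ℝ) (hw : ∀ j, 0 ≤ w j)
    (hbal : ∀ k : Fin K, ∑ j ∈ Finset.univ.filter (fun j => k ∈ v j), w j = 1 / 2)
    (f : Fin K → ℝ) (hf0 : ∀ k, 0 ≤ f k) (hf1 : ∑ k, f k = 1)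
    (y : Fin K) :
    ∑ j, w j * |(∑ k ∈ v j, f k) - (if y ∈ v j then (1 : ℝ) else 0)|
      = ∑ k, f k *
        (1 - 2 * ∑ j ∈ Finset.univ.filter (fun j => y ∈ v j ∧ k ∈ v j), w j) := by
  classical
  -- Step 1: rewrite the absolute value as a sum over classes
  have key : ∀ j, |(∑ k ∈ v j, f k) - (if y ∈ v j then (1 : ℝ) else 0)|
      = ∑ k, f k * (if ((k ∈ v j) ↔ (y ∈ v j)) then 0 else 1) := by
    intro j
    by_cases hy : y ∈ v j
    · simp only [hy, if_true, iff_true]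
      have hS1 : ∑ k ∈ v j, f k ≤ 1 := by
        rw [← hf1]
        exact Finset.sum_le_sum_of_subset_of_nonneg (Finset.subset_univ _)
          (fun k _ _ => hf0 k)
      rw [abs_sub_comm, abs_of_nonneg (by linarith)]
      have : ∑ k, f k * (if k ∈ v j then (0:ℝ) else 1)
          = ∑ k, (f k - (if k ∈ v j then f k else 0)) := by
        apply Finset.sum_congr rfl
        intro k _
        split_ifs <;> ring
      rw [this, Finset.sum_sub_distrib, hf1, ← Finset.sum_filter,
        Finset.filter_mem_eq_inter, Finset.univ_inter]
    · simp only [hy, if_false, iff_false]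
      have hS0 : 0 ≤ ∑ k ∈ v j, f k := Finset.sum_nonneg (fun k _ => hf0 k)
      rw [sub_zero, abs_of_nonneg hS0]
      have : ∑ k, f k * (if ¬ k ∈ v j then (0:ℝ) else 1)
          = ∑ k, (if k ∈ v j then f k else 0) := by
        apply Finset.sum_congr rfl
        intro k _
        split_ifs <;> simp_all
      rw [this, ← Finset.sum_filter, Finset.filter_mem_eq_inter, Finset.univ_inter]
  simp only [key, Finset.mul_sum]
  rw [Finset.sum_comm]
  apply Finset.sum_congr rfl
  intro k _
  have hy := hbal y
  have hk := hbal k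
  rw [Finset.sum_filter] at hy hk
  rw [Finset.sum_filter]
  have pointwise : ∀ j, w j * (f k * (if ((k ∈ v j) ↔ (y ∈ v j)) then (0:ℝ) else 1))
      = f k * ((if y ∈ v j then w j else 0) + (if k ∈ v j then w j else 0)
          - 2 * (if y ∈ v j ∧ k ∈ v j then w j else 0)) := by
    intro j
    by_cases hy' : y ∈ v j <;> by_cases hk' : k ∈ v j <;> simp [hy', hk'] <;> (try ring) <;> tauto
  calc ∑ j, w j * (f k * (if ((k ∈ v j) ↔ (y ∈ v j)) then (0:ℝ) else 1))
      = ∑ j, f k * ((if y ∈ v j then w j else 0) + (if k ∈ v j then w j else 0)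
          - 2 * (if y ∈ v j ∧ k ∈ v j then w j else 0)) := by
        exact Finset.sum_congr rfl (fun j _ => pointwise j)
    _ = f k * ((∑ j, if y ∈ v j then w j else 0) + (∑ j, if k ∈ v j then w j else 0)
          - 2 * ∑ j, (if y ∈ v j ∧ k ∈ v j then w j else 0)) := by
        rw [← Finset.mul_sum, Finset.sum_sub_distrib, Finset.sum_add_distrib,
          ← Finset.mul_sum]
    _ = f k * (1 - ∑ j, (if y ∈ v j ∧ k ∈ v j then 2 * w j else 0)) := by
        rw [hy, hk]
        have h2 : ∑ j, (if y ∈ v j ∧ k ∈ v j then 2 * w j else 0)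
            = (2:ℝ) * ∑ j, (if y ∈ v j ∧ k ∈ v j then w j else 0) := by
          rw [Finset.mul_sum]
          exact Finset.sum_congr rfl (fun j _ => by split_ifs <;> ring)
        rw [h2]; norm_num
end
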